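/- arXiv:2101.10843 — 4 statements merged into one kernel-verified Lean document; each statement's English description precedes it below -/
import Mathlib

section
/- Let q be a prime ideal of S. If ᾱ_i ∈ q for some i ∈ {1,…,8}, then σ ∈ q, and moreover for each m ∈ {1,2,3,4} at least one of ᾱ_m, ᾱ_{m+4} lies in q. -/
open MvPolynomial
open Fin.NatCast

noncomputable section

variable (k : Type*) [Field k]

/-- The polynomial ring in 12 variables `x₁..x₄, y₁..y₄, z₁..z₄`:
a variable is indexed by `(t, i)` with `t : Fin 3` (`0 ↦ x`, `1 ↦ y`, `2 ↦ z`)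
and `i : Fin 4` the index modulo 4. -/
abbrev B := MvPolynomial (Fin 3 × Fin 4) k

/-- `x_i` (indices modulo 4). -/
def xv (i : ℕ) : B k := X (0, (i : Fin 4))
/-- `y_i` (indices modulo 4). -/
def yv (i : ℕ) : B k := X (1, (i : Fin 4))
/-- `z_i` (indices modulo 4). -/
def zv (i : ℕ) : B k := X (2, (i : Fin 4))

/-- `σ = x₁x₂x₃x₄ · y₁y₂y₃y₄ · z₁z₂z₃z₄`, the product of all 12 variables. -/
def sig : B k := ∏ p : Fin 3 × Fin 4, X p

/-- The substitution `x_i ↦ x_{i+1}, y_i ↦ y_{i+1}, z_i ↦ z_{i+1}` (indices mod 4). -/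
def rot : B k →ₐ[k] B k := aeval (fun p => X (p.1, p.2 + 1))

/-- `ᾱ₁ = x₂x₃²x₄ · y₁y₃y₄² · z₁z₂²z₃`. -/
def a1 : B k :=
  xv k 2 * xv k 3 ^ 2 * xv k 4 * yv k 1 * yv k 3 * yv k 4 ^ 2 * zv k 1 * zv k 2 ^ 2 * zv k 3

/-- `ᾱ₂ = (x₁x₄y₁y₄z₁z₄)²`. -/
def a2 : B k := (xv k 1 * xv k 4 * yv k 1 * yv k 4 * zv k 1 * zv k 4) ^ 2

/-- `ᾱ_j` for `j ≥ 1`: `ᾱ₁`, `ᾱ₂` are as above and `ᾱ_{j+2}` is obtained from `ᾱ_j`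
by applying the substitution `rot`. -/
def alpha (j : ℕ) : B k := (⇑(rot k))^[(j - 1) / 2] (if j % 2 = 1 then a1 k else a2 k)
/-- The cycle algebra `S = k[σ, ᾱ₁, …, ᾱ₈] ⊆ B`. -/
def Scal : Subalgebra k (B k) := Algebra.adjoin k (insert (sig k) (alpha k '' Set.Icc 1 8))
/-- Reduction of an index to `{1, …, 8}`, implementing "indices modulo 8". -/
def idx (j : ℕ) : ℕ := (j - 1) % 8 + 1

lemma idx_mem (j : ℕ) : idx j ∈ Set.Icc 1 8 :=
  ⟨Nat.le_add_left 1 _, Nat.succ_le_of_lt (Nat.mod_lt _ (by norm_num))⟩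

/-- `σ` as an element of `S`. -/
def σS : ↥(Scal k) := ⟨sig k, Algebra.subset_adjoin (Set.mem_insert _ _)⟩

/-- `ᾱ_j` (indices modulo 8) as an element of `S`. -/
def αS (j : ℕ) : ↥(Scal k) :=
  ⟨alpha k (idx j), Algebra.subset_adjoin (Set.mem_insert_of_mem _ ⟨idx j, idx_mem j, rfl⟩)⟩

/-!
Since `ᾱ_j ᾱ_{j+4} = σ²` for every `j`, a prime ideal containing one `ᾱ_i` contains `σ²`, hence
`σ`, and then it contains `ᾱ_m ᾱ_{m+4} = σ²`, hence one of its factors. The identity only has to be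
checked for `j = 1, 2`: the rotation fixes `σ` and carries `ᾱ_j` to `ᾱ_{j+2}`.
-/

theorem rot_X (p : Fin 3 × Fin 4) : rot k (X p) = X (p.1, p.2 + 1) :=
  aeval_X _ _

theorem rot_sig : rot k (sig k) = sig k := by
  simp only [sig, map_prod, rot_X]
  exact Fintype.prod_equiv (Equiv.prodCongr (Equiv.refl _) (Equiv.addRight 1)) _ _ fun _ => rfl

theorem alpha_add_two {j : ℕ} (hj : 1 ≤ j) : alpha k (j + 2) = rot k (alpha k j) := by
  have hexp : (j + 2 - 1) / 2 = (j - 1) / 2 + 1 := by omega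
  simp only [alpha, hexp, Nat.add_mod_right, Function.iterate_succ_apply']

theorem alpha_add_four {j : ℕ} (hj : 1 ≤ j) : alpha k (j + 4) = rot k (rot k (alpha k j)) := by
  rw [← alpha_add_two k hj, ← alpha_add_two k (by omega : 1 ≤ j + 2)]

theorem alpha_one : alpha k 1 = a1 k := rfl

theorem alpha_two : alpha k 2 = a2 k := rfl

theorem alpha_one_mul_alpha_five : alpha k 1 * alpha k (1 + 4) = sig k ^ 2 := by
  rw [alpha_add_four k le_rfl, alpha_one]
  simp only [a1, xv, yv, zv, map_mul, map_pow, rot_X, sig, Fintype.prod_prod_type,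
    Fin.prod_univ_four, Fin.prod_univ_three, Nat.cast_one, Nat.cast_ofNat, Fin.isValue,
    Fin.reduceAdd]
  ring

theorem alpha_two_mul_alpha_six : alpha k 2 * alpha k (2 + 4) = sig k ^ 2 := by
  rw [alpha_add_four k (by norm_num), alpha_two]
  simp only [a2, xv, yv, zv, map_mul, map_pow, rot_X, sig, Fintype.prod_prod_type,
    Fin.prod_univ_four, Fin.prod_univ_three, Nat.cast_one, Nat.cast_ofNat, Fin.isValue,
    Fin.reduceAdd]
  ring

theorem alpha_mul_alpha_add_four : ∀ {j : ℕ}, 1 ≤ j → alpha k j * alpha k (j + 4) = sig k ^ 2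
  | 1, _ => alpha_one_mul_alpha_five k
  | 2, _ => alpha_two_mul_alpha_six k
  | j + 3, _ => by
    have hj : 1 ≤ j + 1 := by omega
    rw [alpha_add_two k hj, show j + 3 + 4 = j + 1 + 4 + 2 by omega,
      alpha_add_two k (by omega), ← map_mul, alpha_mul_alpha_add_four hj, map_pow, rot_sig]

theorem idx_eq_self {j : ℕ} (h1 : 1 ≤ j) (h8 : j ≤ 8) : idx j = j := by
  unfold idx
  omega

theorem αS_mul_αS_add_four {j : ℕ} (hj : j ∈ Finset.Icc 1 4) :
    αS k j * αS k (j + 4) = σS k ^ 2 := by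
  rw [Finset.mem_Icc] at hj
  apply Subtype.ext
  change alpha k (idx j) * alpha k (idx (j + 4)) = sig k ^ 2
  rw [idx_eq_self hj.1 (by omega), idx_eq_self (by omega) (by omega)]
  exact alpha_mul_alpha_add_four k hj.1

/-- If `q` is a prime ideal of `S` containing some `ᾱ_i`, `i ∈ {1,…,8}`, then `σ ∈ q` and,
for each `m ∈ {1,2,3,4}`, at least one of `ᾱ_m, ᾱ_{m+4}` lies in `q`. -/
theorem stmt1 (q : Ideal ↥(Scal k)) (hq : q.IsPrime) (i : ℕ) (hi : i ∈ Finset.Icc 1 8)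
    (h : αS k i ∈ q) :
    σS k ∈ q ∧ ∀ m ∈ Finset.Icc 1 4, αS k m ∈ q ∨ αS k (m + 4) ∈ q := by
  have hσ2 : σS k ^ 2 ∈ q := by
    obtain ⟨j, hj, rfl | rfl⟩ : ∃ j ∈ Finset.Icc 1 4, i = j ∨ i = j + 4 := by
      rw [Finset.mem_Icc] at hi
      simp only [Finset.mem_Icc]
      by_cases hi4 : i ≤ 4
      · exact ⟨i, ⟨hi.1, hi4⟩, .inl rfl⟩
      · exact ⟨i - 4, by omega, .inr (by omega)⟩
    · rw [← αS_mul_αS_add_four k hj]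
      exact q.mul_mem_right _ h
    · rw [← αS_mul_αS_add_four k hj]
      exact q.mul_mem_left _ h
  refine ⟨hq.mem_of_pow_mem 2 hσ2, fun m hm => hq.mem_or_mem ?_⟩
  rwa [αS_mul_αS_add_four k hm]

end
end

section
/- For each j ∈ {1,…,5}, the ideal 𝔭_j of S generated by σ, ᾱ_1, …, ᾱ_{3+j} is a prime ideal of S. -/
/-!
Give the twelve variables integer weights for which `σ, ᾱ₁, …, ᾱ_{3+j}` have positive weight and
`ᾱ_{4+j}, …, ᾱ₈` have weight zero. Then every monomial of an element of `S` has nonnegative weight,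
every monomial of an element of `𝔭_j` has positive weight, and every `x ∈ S` is `x₀ + p` with `x₀`
of weight zero and `p ∈ 𝔭_j`. If `xy ∈ 𝔭_j`, then also `x₀y₀ ∈ 𝔭_j`; having weight zero, it
vanishes, and since `B` is a domain, `x₀ = 0` or `y₀ = 0`.
-/

open MvPolynomial
open Fin.NatCast

noncomputable section

variable (k : Type*) [Field k]

/-- The ideal `𝔭_j = (σ, ᾱ₁, …, ᾱ_{3+j})` of `S`. -/
def pIdeal (j : ℕ) : Ideal ↥(Scal k) := Ideal.span (insert (σS k) (αS k '' Set.Icc 1 (3 + j)))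

namespace MvPolynomial

open Finsupp (weight)

variable {σ τ R M : Type*} [CommRing R] [AddCommMonoid M]

theorem IsWeightedHomogeneous.rename {w : τ → M} {f : σ → τ} {φ : MvPolynomial σ R} {m : M}
    (h : IsWeightedHomogeneous (w ∘ f) φ m) : IsWeightedHomogeneous w (rename f φ) m := by
  rw [← φ.support_sum_monomial_coeff, map_sum]
  simp_rw [rename_monomial]
  refine IsWeightedHomogeneous.sum _ _ _ fun d hd ↦ isWeightedHomogeneous_monomial _ _ _ ?_
  rw [← h (mem_support_iff.mp hd), Finsupp.weight_apply, Finsupp.weight_apply,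
    Finsupp.sum_mapDomain_index (by simp) (by simp [add_smul])]
  rfl

variable {w : σ → M} {G : Set (MvPolynomial σ R)} {T : Set (Algebra.adjoin R G)}

theorem exists_isWeightedHomogeneous_zero_sub_mem_span
    (hG : ∀ g ∈ G, IsWeightedHomogeneous w g 0 ∨ ∃ t ∈ T, ↑t = g) (x : Algebra.adjoin R G) :
    ∃ x₀ : Algebra.adjoin R G, IsWeightedHomogeneous w (x₀ : MvPolynomial σ R) 0 ∧
      x - x₀ ∈ Ideal.span T := by
  obtain ⟨x, hx⟩ := x
  induction hx using Algebra.adjoin_induction with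
  | mem g hg =>
    rcases hG g hg with hg0 | ⟨t, ht, rfl⟩
    · exact ⟨⟨g, Algebra.subset_adjoin hg⟩, hg0, by simp⟩
    · exact ⟨0, isWeightedHomogeneous_zero R w 0, by simpa using Ideal.subset_span ht⟩
  | algebraMap r =>
    exact ⟨⟨algebraMap R _ r, Subalgebra.algebraMap_mem _ r⟩, isWeightedHomogeneous_C w r,
      by simp⟩
  | add x y hx hy ihx ihy =>
    obtain ⟨x₀, hx₀, hxI⟩ := ihx
    obtain ⟨y₀, hy₀, hyI⟩ := ihy
    refine ⟨x₀ + y₀, hx₀.add hy₀, ?_⟩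
    convert (Ideal.span T).add_mem hxI hyI using 1
    rw [← AddMemClass.mk_add_mk _ _ _ hx hy]
    abel
  | mul x y hx hy ihx ihy =>
    obtain ⟨x₀, hx₀, hxI⟩ := ihx
    obtain ⟨y₀, hy₀, hyI⟩ := ihy
    refine ⟨x₀ * y₀, by simpa using hx₀.mul hy₀, ?_⟩
    convert (Ideal.span T).add_mem ((Ideal.span T).mul_mem_right ⟨y, hy⟩ hxI)
      ((Ideal.span T).mul_mem_left x₀ hyI) using 1
    rw [← MulMemClass.mk_mul_mk _ _ _ hx hy]
    ring

variable [PartialOrder M] [IsOrderedCancelAddMonoid M]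

theorem weight_nonneg_of_mem_adjoin (hG : ∀ g ∈ G, ∃ m, 0 ≤ m ∧ IsWeightedHomogeneous w g m)
    {p : MvPolynomial σ R} (hp : p ∈ Algebra.adjoin R G) : ∀ d ∈ p.support, 0 ≤ weight w d := by
  classical
  induction hp using Algebra.adjoin_induction with
  | mem g hg =>
    obtain ⟨m, hm, hg⟩ := hG g hg
    exact fun d hd ↦ hg (mem_support_iff.mp hd) ▸ hm
  | algebraMap r =>
    exact fun d hd ↦ (isWeightedHomogeneous_C w r (mem_support_iff.mp hd)).ge
  | add p q _ _ hp hq =>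
    exact fun d hd ↦ (Finset.mem_union.mp (support_add hd)).elim (hp d) (hq d)
  | mul p q _ _ hp hq =>
    intro d hd
    obtain ⟨a, ha, b, hb, rfl⟩ := Finset.mem_add.mp (support_mul p q hd)
    rw [map_add]
    exact add_nonneg (hp a ha) (hq b hb)

theorem weight_pos_of_mem_span (hG : ∀ g ∈ G, ∃ m, 0 ≤ m ∧ IsWeightedHomogeneous w g m)
    (hT : ∀ t ∈ T, ∃ m, 0 < m ∧ IsWeightedHomogeneous w (t : MvPolynomial σ R) m)
    {x : Algebra.adjoin R G} (hx : x ∈ Ideal.span T) :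
    ∀ d ∈ (x : MvPolynomial σ R).support, 0 < weight w d := by
  classical
  induction hx using Submodule.span_induction with
  | mem t ht =>
    obtain ⟨m, hm, ht⟩ := hT t ht
    exact fun d hd ↦ ht (mem_support_iff.mp hd) ▸ hm
  | zero => simp
  | add x y _ _ hx hy =>
    exact fun d hd ↦ (Finset.mem_union.mp (support_add hd)).elim (hx d) (hy d)
  | smul a x _ hx =>
    intro d hd
    obtain ⟨b, hb, c, hc, rfl⟩ := Finset.mem_add.mp (support_mul _ _ hd)
    rw [map_add]
    exact add_pos_of_nonneg_of_pos (weight_nonneg_of_mem_adjoin hG a.2 b hb) (hx c hc)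

theorem isPrime_span_of_isWeightedHomogeneous [IsDomain R]
    (hT : ∀ t ∈ T, ∃ m, 0 < m ∧ IsWeightedHomogeneous w (t : MvPolynomial σ R) m)
    (hG : ∀ g ∈ G, IsWeightedHomogeneous w g 0 ∨ ∃ t ∈ T, ↑t = g) :
    (Ideal.span T).IsPrime := by
  have hG_nonneg : ∀ g ∈ G, ∃ m, 0 ≤ m ∧ IsWeightedHomogeneous w g m := by
    intro g hg
    rcases hG g hg with hg0 | ⟨t, ht, rfl⟩
    · exact ⟨0, le_rfl, hg0⟩
    · obtain ⟨m, hm, ht⟩ := hT t ht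
      exact ⟨m, hm.le, ht⟩
  have eq_zero : ∀ x ∈ Ideal.span T, IsWeightedHomogeneous w (x : MvPolynomial σ R) 0 → x = 0 :=
    fun x hx hx₀ ↦ Subtype.ext <| support_eq_empty.mp <| Finset.eq_empty_of_forall_notMem
      fun d hd ↦ (weight_pos_of_mem_span hG_nonneg hT hx d hd).ne' (hx₀ (mem_support_iff.mp hd))
  refine ⟨fun h ↦ one_ne_zero (eq_zero 1 (h ▸ Submodule.mem_top) (isWeightedHomogeneous_one R w)),
    fun {x y} hxy ↦ ?_⟩
  obtain ⟨x₀, hx₀, hxI⟩ := exists_isWeightedHomogeneous_zero_sub_mem_span hG x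
  obtain ⟨y₀, hy₀, hyI⟩ := exists_isWeightedHomogeneous_zero_sub_mem_span hG y
  have hxy₀ : x₀ * y₀ ∈ Ideal.span T := by
    have h := (Ideal.span T).sub_mem hxy <| (Ideal.span T).add_mem
      ((Ideal.span T).mul_mem_right y hxI) ((Ideal.span T).mul_mem_left x₀ hyI)
    convert h using 1
    ring
  rcases mul_eq_zero.mp (eq_zero _ hxy₀ (by simpa using hx₀.mul hy₀)) with rfl | rfl
  · exact Or.inl (by simpa using hxI)
  · exact Or.inr (by simpa using hyI)

end MvPolynomial

variable {k}

def a1Weight (w : Fin 3 × Fin 4 → ℤ) : ℤ :=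
  w (0, 2) + 2 * w (0, 3) + w (0, 4) + w (1, 1) + w (1, 3) + 2 * w (1, 4) +
    w (2, 1) + 2 * w (2, 2) + w (2, 3)

def a2Weight (w : Fin 3 × Fin 4 → ℤ) : ℤ :=
  2 * (w (0, 1) + w (0, 4) + w (1, 1) + w (1, 4) + w (2, 1) + w (2, 4))

def alphaWeight (w : Fin 3 × Fin 4 → ℤ) (i : ℕ) : ℤ :=
  (if i % 2 = 1 then a1Weight else a2Weight) fun v ↦ w (v.1, v.2 + ((i - 1) / 2 : ℕ))

variable (w : Fin 3 × Fin 4 → ℤ)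

lemma isWeightedHomogeneous_sig : IsWeightedHomogeneous w (sig k) (∑ v, w v) :=
  IsWeightedHomogeneous.prod _ _ _ fun v _ ↦ isWeightedHomogeneous_X k w v

lemma isWeightedHomogeneous_a1 : IsWeightedHomogeneous w (a1 k) (a1Weight w) := by
  have hX := isWeightedHomogeneous_X k w
  unfold a1 xv yv zv
  convert (((((((((hX _).mul ((hX _).pow 2)).mul (hX _)).mul (hX _)).mul (hX _)).mul
    ((hX _).pow 2)).mul (hX _)).mul ((hX _).pow 2)).mul (hX _)) using 1
  simp [a1Weight]

lemma isWeightedHomogeneous_a2 : IsWeightedHomogeneous w (a2 k) (a2Weight w) := by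
  have hX := isWeightedHomogeneous_X k w
  unfold a2 xv yv zv
  convert (((((((hX _).mul (hX _)).mul (hX _)).mul (hX _)).mul (hX _)).mul (hX _)).pow 2)
    using 1
  simp [a2Weight]

lemma rot_eq_rename : rot k = rename fun v : Fin 3 × Fin 4 ↦ (v.1, v.2 + 1) :=
  algHom_ext fun _ ↦ by simp [rot]

lemma isWeightedHomogeneous_rot_iterate {p : B k} {m : ℤ} (n : ℕ)
    (h : IsWeightedHomogeneous (fun v ↦ w (v.1, v.2 + n)) p m) :
    IsWeightedHomogeneous w ((rot k)^[n] p) m := by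
  induction n generalizing w with
  | zero => simpa using h
  | succ n ih =>
    rw [Function.iterate_succ_apply']
    nth_rw 1 [rot_eq_rename]
    refine IsWeightedHomogeneous.rename (ih _ ?_)
    simpa [Function.comp_def, add_assoc] using h

lemma isWeightedHomogeneous_alpha (i : ℕ) :
    IsWeightedHomogeneous w (alpha k i) (alphaWeight w i) := by
  unfold alpha alphaWeight
  apply isWeightedHomogeneous_rot_iterate
  split_ifs
  exacts [isWeightedHomogeneous_a1 _, isWeightedHomogeneous_a2 _]

lemma idx_of_mem_Icc {i : ℕ} (hi : i ∈ Set.Icc 1 8) : idx i = i := by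
  unfold idx
  grind

variable (k) in
theorem pIdeal_isPrime_of_weight {j : ℕ} (hj : j ≤ 5) (hσ : 0 < ∑ v, w v)
    (hpos : ∀ i ∈ Finset.Icc 1 (3 + j), 0 < alphaWeight w i)
    (hzero : ∀ i ∈ Finset.Icc (4 + j) 8, alphaWeight w i = 0) :
    (pIdeal k j).IsPrime := by
  have αS_val {i : ℕ} (hi : i ∈ Set.Icc 1 (3 + j)) : (αS k i : B k) = alpha k i := by
    change alpha k (idx i) = _
    rw [idx_of_mem_Icc ⟨hi.1, by grind⟩]
  apply isPrime_span_of_isWeightedHomogeneous (w := w)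
  · rintro _ (rfl | ⟨i, hi, rfl⟩)
    · exact ⟨_, hσ, isWeightedHomogeneous_sig w⟩
    · exact ⟨_, hpos i (by simpa using hi), αS_val hi ▸ isWeightedHomogeneous_alpha w i⟩
  · rintro _ (rfl | ⟨i, hi, rfl⟩)
    · exact Or.inr ⟨σS k, Set.mem_insert _ _, rfl⟩
    · by_cases hij : i ≤ 3 + j
      · exact Or.inr ⟨αS k i, Set.mem_insert_of_mem _ ⟨i, ⟨hi.1, hij⟩, rfl⟩, αS_val ⟨hi.1, hij⟩⟩
      · exact Or.inl (hzero i (by simp at hi ⊢; omega) ▸ isWeightedHomogeneous_alpha w i)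

-- Column `i` holds the weights of `x_i, y_i, z_i`, indices modulo 4: column 0 is `x₄, y₄, z₄`.
def pIdealWeight : ℕ → Fin 3 × Fin 4 → ℤ
  | 1 => fun v ↦ !![14, -1, 12, -3; -2, -3, -3, -3; -3, -3, 0, -3] v.1 v.2
  | 2 => fun v ↦ !![5, 0, 4, -1; -1, -1, -1, -1; -1, -1, 0, -1] v.1 v.2
  | 3 => fun v ↦ !![2, 1, -1, -1; -1, 0, 1, 0; -1, 1, 1, 1] v.1 v.2
  | 4 => fun v ↦ !![1, -1, -1, -1; -1, 1, 1, 1; 0, 1, 1, 0] v.1 v.2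
  | _ => 1

lemma pIdealWeight_spec : ∀ j ∈ Finset.Icc 1 5, 0 < ∑ v, pIdealWeight j v ∧
    (∀ i ∈ Finset.Icc 1 (3 + j), 0 < alphaWeight (pIdealWeight j) i) ∧
    ∀ i ∈ Finset.Icc (4 + j) 8, alphaWeight (pIdealWeight j) i = 0 := by
  decide

variable (k)

/-- For each `j ∈ {1,…,5}`, the ideal `𝔭_j = (σ, ᾱ₁, …, ᾱ_{3+j})` of `S` is prime. -/
theorem stmt2 : ∀ j ∈ Finset.Icc 1 5, (pIdeal k j).IsPrime := fun j hj ↦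
  have ⟨hσ, hpos, hzero⟩ := pIdealWeight_spec j hj
  pIdeal_isPrime_of_weight k _ (Finset.mem_Icc.mp hj).2 hσ hpos hzero

end
end

section
/- The subring R = k + x·k[x,y] of the polynomial ring S = k[x,y] (consisting of all polynomials whose constant-term-in-x part is a constant, i.e., all f ∈ k[x,y] with f(0,y) ∈ k) is not a noetherian ring. -/
/-!
The ideal `x·S` of `R` is not finitely generated. If `x·g₁, …, x·gₘ` generated it, then
`x·yⁿ = ∑ rᵢ·x·gᵢ` with `rᵢ ∈ R`; cancelling `x` and setting `x = 0` puts every `yⁿ` in the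
`k`-span of the `gᵢ(0,y)`, because each `rᵢ(0,y)` is a constant. That span has bounded degree.
-/

open MvPolynomial

noncomputable section

variable (k : Type*) [Field k]

/-- The polynomial ring `S = k[x, y]`; `x` is `X 0` and `y` is `X 1`. -/
abbrev T := MvPolynomial (Fin 2) k

/-- The subring `R = k + x·k[x,y]` of `S = k[x,y]`, consisting of all polynomials of the
form `c + x·g` with `c ∈ k` and `g ∈ S`. -/
def Rxy : Subalgebra k (T k) where
  carrier := {f | ∃ c : k, ∃ g : T k, f = C c + X 0 * g}
  add_mem' := by
    rintro a b ⟨c₁, g₁, rfl⟩ ⟨c₂, g₂, rfl⟩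
    exact ⟨c₁ + c₂, g₁ + g₂, by rw [map_add]; ring⟩
  mul_mem' := by
    rintro a b ⟨c₁, g₁, rfl⟩ ⟨c₂, g₂, rfl⟩
    exact ⟨c₁ * c₂, C c₁ * g₂ + C c₂ * g₁ + X 0 * (g₁ * g₂), by rw [map_mul]; ring⟩
  algebraMap_mem' := fun c => ⟨c, 0, by rw [algebraMap_eq]; ring⟩

def evalXZero : T k →ₐ[k] Polynomial k := aeval ![0, Polynomial.X]

@[simp]
lemma evalXZero_X_one : evalXZero k (X 1) = Polynomial.X := by simp [evalXZero]

def xIdeal : Ideal (Rxy k) := (Ideal.span {X 0}).comap (Rxy k).val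

variable {k}

lemma mem_xIdeal_iff {f : Rxy k} : f ∈ xIdeal k ↔ X 0 ∣ (f : T k) :=
  Ideal.mem_span_singleton

lemma X_zero_mul_mem_Rxy (g : T k) : X 0 * g ∈ Rxy k := ⟨0, g, by rw [map_zero, zero_add]⟩

lemma exists_evalXZero_eq_C_of_mem_Rxy {f : T k} (hf : f ∈ Rxy k) :
    ∃ c : k, evalXZero k f = Polynomial.C c := by
  obtain ⟨c, g, rfl⟩ := hf
  exact ⟨c, by simp [evalXZero]⟩

lemma evalXZero_mem_span_of_mem_span {s : Finset (Rxy k)} {G : Rxy k → T k}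
    (hG : ∀ f ∈ s, (f : T k) = X 0 * G f) {p : Rxy k} (hp : p ∈ Ideal.span (s : Set (Rxy k)))
    {h : T k} (hph : (p : T k) = X 0 * h) :
    evalXZero k h ∈ Submodule.span k ((fun f => evalXZero k (G f)) '' s) := by
  obtain ⟨r, -, hr⟩ := Submodule.mem_span_finset.mp hp
  rw [Subtype.ext_iff, AddSubmonoidClass.coe_finsetSum, hph] at hr
  have hsum : X 0 * h = X 0 * ∑ f ∈ s, (r f : T k) * G f := by
    rw [Finset.mul_sum, ← hr]
    refine Finset.sum_congr rfl fun f hf => ?_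
    rw [smul_eq_mul, Subalgebra.coe_mul, hG f hf]
    ring
  rw [mul_left_cancel₀ (X_ne_zero 0) hsum, map_sum]
  refine Submodule.sum_mem _ fun f hf => ?_
  obtain ⟨c, hc⟩ := exists_evalXZero_eq_C_of_mem_Rxy (r f).2
  rw [map_mul, hc, ← Polynomial.smul_eq_C_mul]
  exact Submodule.smul_mem _ _ (Submodule.subset_span ⟨f, hf, rfl⟩)

variable (k)

theorem xIdeal_not_fg : ¬ (xIdeal k).FG := by
  rintro ⟨s, hs⟩
  have hdvd (f : Rxy k) (hf : f ∈ s) : X 0 ∣ (f : T k) :=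
    mem_xIdeal_iff.mp (hs ▸ Ideal.subset_span hf)
  choose! G hG using hdvd
  obtain ⟨n, hn⟩ := Polynomial.span_le_degreeLE_of_finite
    (s.finite_toSet.image fun f => evalXZero k (G f))
  have hmem : (⟨X 0 * X 1 ^ (n + 1), X_zero_mul_mem_Rxy _⟩ : Rxy k) ∈ Ideal.span s :=
    hs ▸ mem_xIdeal_iff.mpr (dvd_mul_right _ _)
  have hpow := hn (evalXZero_mem_span_of_mem_span hG hmem rfl)
  rw [map_pow, evalXZero_X_one, Polynomial.mem_degreeLE, Polynomial.degree_X_pow,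
    Nat.cast_le] at hpow
  omega

/-- The subring `R = k + x·k[x,y]` of the polynomial ring `S = k[x,y]` is not noetherian. -/
theorem stmt11 : ¬ IsNoetherianRing ↥(Rxy k) := fun _ =>
  xIdeal_not_fg k (IsNoetherian.noetherian _)

end
end

section
/- Let 𝔫 be a maximal ideal of S = k[x,y] and set 𝔭 = 𝔫 ∩ R where R = k + xS. If x ∉ 𝔫, then the localizations R_𝔭 and S_𝔫 coincide (as subrings of the fraction field k(x,y)); if x ∈ 𝔫, then R_𝔭 is not a noetherian ring. In particular, the noetherian locus U_{S/R} = {𝔫 ∈ Max S : R_{𝔫∩R} = S_𝔫} equals {𝔫 ∈ Max S : x ∉ 𝔫} and is nonempty. -/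
open MvPolynomial

noncomputable section

variable (k : Type*) [Field k]
variable [IsAlgClosed k]

/-- The localization `S_𝔫`, as a subset of the fraction field of `S = k[x,y]`. -/
def locT (n : Ideal (T k)) : Set (FractionRing (T k)) :=
  {x | ∃ a b : T k, b ∉ n ∧
    x * algebraMap (T k) (FractionRing (T k)) b = algebraMap (T k) (FractionRing (T k)) a}

/-- The localization `R_{𝔫 ∩ R}`, as a subset of the fraction field of `S = k[x,y]`. -/
def locRxy (n : Ideal (T k)) : Set (FractionRing (T k)) :=
  {x | ∃ a b : T k, a ∈ Rxy k ∧ b ∈ Rxy k ∧ b ∉ n ∧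
    x * algebraMap (T k) (FractionRing (T k)) b = algebraMap (T k) (FractionRing (T k)) a}

set_option synthInstance.maxHeartbeats 1000000 in
/-- The localization `R_{𝔫 ∩ R}` at a prime ideal `𝔫` of `S`, as a subring of the fraction
field of `S = k[x,y]`. -/
def locRxySubring (n : Ideal (T k)) (hn : n.IsPrime) : Subring (FractionRing (T k)) where
  carrier := locRxy k n
  zero_mem' := ⟨0, 1, (Rxy k).zero_mem, (Rxy k).one_mem, fun h => hn.ne_top (n.eq_top_of_isUnit_mem h isUnit_one), by simp⟩
  one_mem' := ⟨1, 1, (Rxy k).one_mem, (Rxy k).one_mem, fun h => hn.ne_top (n.eq_top_of_isUnit_mem h isUnit_one), by simp⟩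
  add_mem' := by
    rintro x y ⟨a₁, b₁, ha₁, hb₁, hb₁n, he₁⟩ ⟨a₂, b₂, ha₂, hb₂, hb₂n, he₂⟩
    refine ⟨a₁ * b₂ + a₂ * b₁, b₁ * b₂, ?_, ?_, ?_, ?_⟩
    · exact add_mem (mul_mem ha₁ hb₂) (mul_mem ha₂ hb₁)
    · exact mul_mem hb₁ hb₂
    · exact fun h => ((hn.mem_or_mem h).elim hb₁n hb₂n)
    · rw [map_add, map_mul, map_mul, map_mul]
      calc (x + y) * (algebraMap (T k) (FractionRing (T k)) b₁ * algebraMap (T k) (FractionRing (T k)) b₂)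
          = x * algebraMap (T k) (FractionRing (T k)) b₁ * algebraMap (T k) (FractionRing (T k)) b₂
            + y * algebraMap (T k) (FractionRing (T k)) b₂ * algebraMap (T k) (FractionRing (T k)) b₁ := by ring
        _ = _ := by rw [he₁, he₂]
  mul_mem' := by
    rintro x y ⟨a₁, b₁, ha₁, hb₁, hb₁n, he₁⟩ ⟨a₂, b₂, ha₂, hb₂, hb₂n, he₂⟩
    refine ⟨a₁ * a₂, b₁ * b₂, mul_mem ha₁ ha₂, mul_mem hb₁ hb₂,
      fun h => ((hn.mem_or_mem h).elim hb₁n hb₂n), ?_⟩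
    rw [map_mul, map_mul]
    calc x * y * (algebraMap (T k) (FractionRing (T k)) b₁ * algebraMap (T k) (FractionRing (T k)) b₂)
        = (x * algebraMap (T k) (FractionRing (T k)) b₁) * (y * algebraMap (T k) (FractionRing (T k)) b₂) := by ring
      _ = _ := by rw [he₁, he₂]
  neg_mem' := by
    rintro x ⟨a, b, ha, hb, hbn, he⟩
    exact ⟨-a, b, neg_mem ha, hb, hbn, by rw [map_neg, neg_mul, he]⟩

/-!
Since `x·S ⊆ R`, away from `x = 0` every fraction `a / b` can be rewritten as `x a / x b` with
numerator and denominator in `R`. If `x ∈ 𝔫`, an element of `R` outside `𝔫` has nonzero constant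
term, and `R` acts on the coefficient of `yᵐ` of a polynomial through constant terms. Hence the
fractions `x s / b` with `s` free of the monomial `yᵐ` form an ideal of `R_𝔭` that contains
every `x yⁱ` with `i ≠ m` but not `x yᵐ`, so the ideals `(x, x y, …, x yᵐ⁻¹)` of `R_𝔭` increase
strictly. The same ideal shows `y ∉ R_𝔭`, which separates `R_𝔭` from `S_𝔫`.
-/

theorem not_isNoetherianRing_of_forall_notMem_span {A : Type*} [CommRing A] (f : ℕ → A)
    (hf : ∀ m, f m ∉ Ideal.span (f '' Set.Iio m)) : ¬ IsNoetherianRing A := by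
  intro hA
  obtain ⟨N, hN⟩ := monotone_stabilizes_iff_noetherian.mpr (isNoetherianRing_iff.mp hA)
    ⟨fun m => Ideal.span (f '' Set.Iio m),
      fun _ _ hmm => Ideal.span_mono (Set.image_mono (Set.Iio_subset_Iio hmm))⟩
  apply hf N
  rw [show Ideal.span (f '' Set.Iio N) = Ideal.span (f '' Set.Iio (N + 1)) from hN _ N.le_succ]
  exact Ideal.subset_span ⟨N, N.lt_succ_self, rfl⟩

section

variable {k}
omit [IsAlgClosed k]

local notation "ι" => algebraMap (T k) (FractionRing (T k))

lemma coeff_mul_of_mem_Rxy {r : T k} (hr : r ∈ Rxy k) (s : T k) {d : Fin 2 →₀ ℕ}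
    (hd : d 0 = 0) :
    coeff d (r * s) = constantCoeff r * coeff d s := by
  obtain ⟨c, g, rfl⟩ := hr
  rw [add_mul, coeff_add, coeff_C_mul, mul_assoc, coeff_X_mul', if_neg (by simpa using hd)]
  simp

lemma constantCoeff_ne_zero_of_mem_Rxy {n : Ideal (T k)} (hx : X 0 ∈ n) {b : T k}
    (hb : b ∈ Rxy k) (hbn : b ∉ n) : constantCoeff b ≠ 0 := by
  obtain ⟨c, g, rfl⟩ := hb
  rintro hc
  obtain rfl : c = 0 := by simpa using hc
  exact hbn (by simpa using n.mul_mem_right g hx)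

lemma algebraMap_mem_locRxy {n : Ideal (T k)} (hn : n.IsPrime) {a : T k} (ha : a ∈ Rxy k) :
    ι a ∈ locRxy k n :=
  ⟨a, 1, ha, (Rxy k).one_mem, (Ideal.ne_top_iff_one n).mp hn.ne_top, by simp⟩

lemma locRxy_subset_locT (n : Ideal (T k)) : locRxy k n ⊆ locT k n :=
  fun _ ⟨a, b, _, _, hbn, he⟩ => ⟨a, b, hbn, he⟩

lemma locRxy_eq_locT {n : Ideal (T k)} (hn : n.IsPrime) (hx : X 0 ∉ n) :
    locRxy k n = locT k n := by
  refine (locRxy_subset_locT n).antisymm fun z ⟨a, b, hbn, he⟩ => ?_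
  refine ⟨X 0 * a, X 0 * b, ⟨0, a, by simp⟩, ⟨0, b, by simp⟩,
    fun h => (hn.mem_or_mem h).elim hx hbn, ?_⟩
  rw [map_mul, map_mul, ← he]
  ring

variable {n : Ideal (T k)} (hn : n.IsPrime)

def xyPow (i : ℕ) : locRxySubring k n hn :=
  ⟨ι (X 0 * X 1 ^ i), algebraMap_mem_locRxy hn ⟨0, X 1 ^ i, by simp⟩⟩

variable (hx : X 0 ∈ n)

def coeffVanishingIdeal (m : ℕ) : Ideal (locRxySubring k n hn) where
  carrier := {z | ∃ b ∈ Rxy k, constantCoeff b ≠ 0 ∧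
    ∃ s : T k, (z : FractionRing (T k)) * ι b = ι (X 0 * s) ∧ coeff (Finsupp.single 1 m) s = 0}
  zero_mem' := ⟨1, (Rxy k).one_mem, by simp, 0, by simp⟩
  add_mem' := by
    rintro z₁ z₂ ⟨b₁, hb₁, hb₁0, s₁, he₁, hs₁⟩ ⟨b₂, hb₂, hb₂0, s₂, he₂, hs₂⟩
    refine ⟨b₁ * b₂, mul_mem hb₁ hb₂, by simp [hb₁0, hb₂0], b₂ * s₁ + b₁ * s₂, ?_, ?_⟩
    · simp only [Subring.coe_add, map_mul, map_add] at he₁ he₂ ⊢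
      linear_combination ι b₂ * he₁ + ι b₁ * he₂
    · rw [coeff_add, coeff_mul_of_mem_Rxy hb₂ _ (by simp), coeff_mul_of_mem_Rxy hb₁ _ (by simp),
        hs₁, hs₂]
      ring
  smul_mem' := by
    rintro ⟨r, a, c, ha, hc, hcn, hr⟩ z ⟨b, hb, hb0, s, he, hs⟩
    refine ⟨c * b, mul_mem hc hb, by simp [hb0, constantCoeff_ne_zero_of_mem_Rxy hx hc hcn],
      a * s, ?_, ?_⟩
    · simp only [smul_eq_mul, Subring.coe_mul, map_mul] at hr he ⊢
      linear_combination ι b * z * hr + ι a * he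
    · rw [coeff_mul_of_mem_Rxy ha _ (by simp), hs, mul_zero]

lemma xyPow_mem_coeffVanishingIdeal {i m : ℕ} (him : i ≠ m) :
    xyPow hn i ∈ coeffVanishingIdeal hn hx m :=
  ⟨1, (Rxy k).one_mem, by simp, X 1 ^ i, by simp [xyPow], by
    rw [coeff_X_pow, if_neg ((Finsupp.single_injective 1).ne him)]⟩

lemma xyPow_notMem_coeffVanishingIdeal (m : ℕ) :
    xyPow hn m ∉ coeffVanishingIdeal hn hx m := by
  rintro ⟨b, hb, hb0, s, he, hs⟩
  have hs' : s = b * X 1 ^ m := by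
    change ι (X 0 * X 1 ^ m) * ι b = _ at he
    rw [← map_mul] at he
    refine (mul_left_cancel₀ (X_ne_zero 0) ?_).symm
    rw [← IsFractionRing.injective (T k) (FractionRing (T k)) he]
    ring
  rw [hs', coeff_mul_of_mem_Rxy hb _ (by simp), coeff_X_pow, if_pos rfl, mul_one] at hs
  exact hb0 hs

include hx in
theorem not_isNoetherianRing_locRxySubring : ¬ IsNoetherianRing (locRxySubring k n hn) := by
  refine not_isNoetherianRing_of_forall_notMem_span (xyPow hn) fun m hm => ?_
  refine xyPow_notMem_coeffVanishingIdeal hn hx m (Ideal.span_le.mpr ?_ hm)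
  rintro _ ⟨i, hi, rfl⟩
  exact xyPow_mem_coeffVanishingIdeal hn hx (Set.mem_Iio.mp hi).ne

include hn hx in
lemma X1_notMem_locRxy : ι (X 1) ∉ locRxy k n := by
  intro hy
  have hmul : ⟨ι (X 1), hy⟩ * xyPow hn 0 = xyPow hn 1 := Subtype.ext <| by
    simp only [xyPow, Subring.coe_mul, ← map_mul]
    congr 1
    ring
  refine xyPow_notMem_coeffVanishingIdeal hn hx 1 (hmul ▸ Ideal.mul_mem_left _ _ ?_)
  exact xyPow_mem_coeffVanishingIdeal hn hx zero_ne_one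

include hn in
lemma locRxy_eq_locT_iff : locRxy k n = locT k n ↔ X 0 ∉ n :=
  ⟨fun h hx => X1_notMem_locRxy hn hx <|
      h ▸ ⟨X 1, 1, (Ideal.ne_top_iff_one n).mp hn.ne_top, by simp⟩,
    locRxy_eq_locT hn⟩

omit n in
lemma exists_isMaximal_X0_notMem : ∃ n : Ideal (T k), n.IsMaximal ∧ X 0 ∉ n := by
  let f : T k →+* k := eval ![1, 0]
  refine ⟨RingHom.ker f, RingHom.ker_isMaximal_of_surjective f fun a => ⟨C a, eval_C a⟩, ?_⟩
  simp [f]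

end

/-- Let `𝔫` be a maximal ideal of `S = k[x,y]` and `𝔭 = 𝔫 ∩ R` where `R = k + xS`.
If `x ∉ 𝔫` then `R_𝔭` and `S_𝔫` coincide as subrings of the fraction field `k(x,y)`;
if `x ∈ 𝔫` then `R_𝔭` is not noetherian. In particular, the noetherian locus
`U_{S/R} = {𝔫 ∈ Max S : R_{𝔫 ∩ R} = S_𝔫}` equals `{𝔫 ∈ Max S : x ∉ 𝔫}` and is nonempty. -/
theorem stmt12 :
    (∀ n : Ideal (T k), n.IsMaximal → X 0 ∉ n → locRxy k n = locT k n) ∧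
    (∀ (n : Ideal (T k)) (hn : n.IsMaximal), X 0 ∈ n →
      ¬ IsNoetherianRing ↥(locRxySubring k n hn.isPrime)) ∧
    ({n : Ideal (T k) | n.IsMaximal ∧ locRxy k n = locT k n} =
      {n : Ideal (T k) | n.IsMaximal ∧ X 0 ∉ n}) ∧
    {n : Ideal (T k) | n.IsMaximal ∧ locRxy k n = locT k n}.Nonempty := by
  have hlocus : {n : Ideal (T k) | n.IsMaximal ∧ locRxy k n = locT k n} =
      {n : Ideal (T k) | n.IsMaximal ∧ X 0 ∉ n} :=
    Set.ext fun n => and_congr_right fun hn => locRxy_eq_locT_iff hn.isPrime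
  refine ⟨fun n hn => locRxy_eq_locT hn.isPrime,
    fun n hn => not_isNoetherianRing_locRxySubring hn.isPrime, hlocus, ?_⟩
  rw [hlocus]
  exact exists_isMaximal_X0_notMem
end
end
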